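/- arXiv:1505.06995 — 2 statements merged into one kernel-verified Lean document; each statement's English description precedes it below -/
import Mathlib

section
/- Fix integers d ≥ 1 and n ≥ 1, and let U ⊆ ℝ^d be a convex open neighborhood of the origin. Let a be a smooth connection one-form on U that is in radial gauge with respect to the origin. Then for every x ∈ U and every index ν ∈ {1, …, d}, a_ν(x) = ∫₀¹ t · (Σ_{μ=1}^d x_μ F_{μν}(t x)) dt. -/
open MeasureTheory Matrix intervalIntegral

attribute [local instance] Matrix.frobeniusSeminormedAddCommGroup
  Matrix.frobeniusNormedAddCommGroup Matrix.frobeniusIsBoundedSMul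
  Matrix.frobeniusNormedSpace

/-- The partial derivative `∂_μ f(x)` of a matrix-valued function on `ℝ^d`, i.e. the Fréchet
derivative at `x` applied to the `μ`-th standard basis vector. -/
noncomputable def ymPDeriv (d n : ℕ)
    (f : EuclideanSpace ℝ (Fin d) → Matrix (Fin n) (Fin n) ℂ) (μ : Fin d)
    (x : EuclideanSpace ℝ (Fin d)) : Matrix (Fin n) (Fin n) ℂ :=
  fderiv ℝ f x (EuclideanSpace.single μ 1)

/-- The curvature `F_{μν} = ∂_μ a_ν − ∂_ν a_μ + [a_μ, a_ν]` of a connection one-form `a`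
on an open subset of `ℝ^d` with values in `𝔲(n) ⊆ ℂ^{n×n}`. -/
noncomputable def ymCurv (d n : ℕ)
    (a : Fin d → EuclideanSpace ℝ (Fin d) → Matrix (Fin n) (Fin n) ℂ) (μ ν : Fin d)
    (x : EuclideanSpace ℝ (Fin d)) : Matrix (Fin n) (Fin n) ℂ :=
  ymPDeriv d n (a ν) μ x - ymPDeriv d n (a μ) ν x
    + (a μ x * a ν x - a ν x * a μ x)

/-- Radial-gauge line-integral identity: if `a` is a smooth `𝔲(n)`-valued connection one-form
on a convex open neighborhood `U` of the origin in `ℝ^d` that is in radial gauge with respect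
to the origin (`a_μ(0) = 0` and `Σ_μ x_μ a_μ(x) = 0` on `U`), then for every `x ∈ U` and
every index `ν`, `a_ν(x) = ∫₀¹ t (Σ_μ x_μ F_{μν}(t x)) dt`. -/
theorem radial_gauge_line_integral
    (d n : ℕ) (hd : 1 ≤ d) (hn : 1 ≤ n)
    (U : Set (EuclideanSpace ℝ (Fin d))) (hUopen : IsOpen U) (hUconv : Convex ℝ U)
    (hU0 : (0 : EuclideanSpace ℝ (Fin d)) ∈ U)
    (a : Fin d → EuclideanSpace ℝ (Fin d) → Matrix (Fin n) (Fin n) ℂ)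
    (ha : ∀ μ, ContDiffOn ℝ (⊤ : ℕ∞) (a μ) U)
    (hskew : ∀ μ, ∀ x ∈ U, (a μ x)ᴴ = -(a μ x))
    (hrad0 : ∀ μ, a μ 0 = 0)
    (hrad : ∀ x ∈ U, ∑ μ, x μ • a μ x = 0)
    (x : EuclideanSpace ℝ (Fin d)) (hx : x ∈ U) (ν : Fin d) :
    a ν x = ∫ t in (0 : ℝ)..1, t • ∑ μ, x μ • ymCurv d n a μ ν (t • x) := by
  classical
  -- membership of the ray in U
  have hmem : ∀ t : ℝ, t ∈ Set.uIcc (0:ℝ) 1 → t • x ∈ U := by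
    intro t ht
    rw [Set.uIcc_of_le (by norm_num : (0:ℝ) ≤ 1)] at ht
    have := hUconv hU0 hx (by linarith [ht.2] : (0:ℝ) ≤ 1 - t) ht.1 (by ring)
    simpa using this
  have hdiff : ∀ μ, ∀ y ∈ U, DifferentiableAt ℝ (a μ) y := by
    intro μ y hy
    exact ((ha μ).differentiableOn (by simp)).differentiableAt (hUopen.mem_nhds hy)
  -- the radial-gauge identity, differentiated in direction e_ν
  have hradD : ∀ y ∈ U,
      a ν y + ∑ μ, y μ • (fderiv ℝ (a μ) y (EuclideanSpace.single ν 1)) = 0 := by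
    intro y hy
    have hterm : ∀ μ : Fin d, HasFDerivAt (fun z : EuclideanSpace ℝ (Fin d) => z μ • a μ z)
        ((y μ : ℝ) • fderiv ℝ (a μ) y
          + (EuclideanSpace.proj μ : EuclideanSpace ℝ (Fin d) →L[ℝ] ℝ).smulRight (a μ y)) y := by
      intro μ
      exact ((EuclideanSpace.proj μ : EuclideanSpace ℝ (Fin d) →L[ℝ] ℝ).hasFDerivAt).smul
        ((hdiff μ y hy).hasFDerivAt)
    have hsum : HasFDerivAt (fun z : EuclideanSpace ℝ (Fin d) => ∑ μ, z μ • a μ z)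
        (∑ μ, ((y μ : ℝ) • fderiv ℝ (a μ) y
          + (EuclideanSpace.proj μ : EuclideanSpace ℝ (Fin d) →L[ℝ] ℝ).smulRight (a μ y))) y :=
      HasFDerivAt.fun_sum (fun μ _ => hterm μ)
    have hzero : HasFDerivAt (fun _ : EuclideanSpace ℝ (Fin d) =>
        (0 : Matrix (Fin n) (Fin n) ℂ))
        (∑ μ, ((y μ : ℝ) • fderiv ℝ (a μ) y
          + (EuclideanSpace.proj μ : EuclideanSpace ℝ (Fin d) →L[ℝ] ℝ).smulRight (a μ y))) y := by
      refine hsum.congr_of_eventuallyEq ?_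
      filter_upwards [hUopen.mem_nhds hy] with z hz
      exact (hrad z hz).symm
    have h0 : (∑ μ, ((y μ : ℝ) • fderiv ℝ (a μ) y
        + (EuclideanSpace.proj μ : EuclideanSpace ℝ (Fin d) →L[ℝ] ℝ).smulRight (a μ y)))
        = (0 : EuclideanSpace ℝ (Fin d) →L[ℝ] Matrix (Fin n) (Fin n) ℂ) := by
      have h := hzero.fderiv
      rw [fderiv_const_apply] at h
      exact h.symm.trans rfl
    have hval : ∑ μ, ((y μ : ℝ) • (fderiv ℝ (a μ) y) (EuclideanSpace.single ν 1)
        + ((EuclideanSpace.single ν 1 : EuclideanSpace ℝ (Fin d)) μ) • a μ y) = 0 := by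
      have := congrArg
        (fun L : EuclideanSpace ℝ (Fin d) →L[ℝ] Matrix (Fin n) (Fin n) ℂ =>
          L (EuclideanSpace.single ν 1)) h0
      simpa [ContinuousLinearMap.sum_apply, ContinuousLinearMap.add_apply,
        ContinuousLinearMap.smul_apply, ContinuousLinearMap.smulRight_apply,
        PiLp.proj_apply] using this
    have hsingle : ∑ μ, ((EuclideanSpace.single ν 1 : EuclideanSpace ℝ (Fin d)) μ) • a μ y
        = a ν y := by
      rw [Finset.sum_eq_single ν]
      · simp [EuclideanSpace.single_apply]
      · intro b _ hb
        simp [EuclideanSpace.single_apply, hb]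
      · simp
    rw [Finset.sum_add_distrib, hsingle, add_comm] at hval
    exact hval
  -- decomposition of x in the standard basis
  have hxsum : (x : EuclideanSpace ℝ (Fin d))
      = ∑ μ, x μ • (EuclideanSpace.single μ 1 : EuclideanSpace ℝ (Fin d)) := by
    ext i
    rw [WithLp.ofLp_sum, Fintype.sum_apply]
    simp only [PiLp.smul_apply, EuclideanSpace.single_apply, smul_eq_mul]
    rw [Finset.sum_eq_single i]
    · simp
    · intro b _ hb
      simp [Ne.symm hb]
    · simp
  have hLx : ∀ (L : EuclideanSpace ℝ (Fin d) →L[ℝ] Matrix (Fin n) (Fin n) ℂ),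
      L x = ∑ μ, x μ • L (EuclideanSpace.single μ 1) := by
    intro L
    conv_lhs => rw [hxsum]
    rw [map_sum]
    simp
  -- derivative of g(t) = t • a_ν(t x)
  have hg : ∀ t ∈ Set.uIcc (0:ℝ) 1,
      HasDerivAt (fun s : ℝ => s • a ν (s • x))
        (t • ∑ μ, x μ • ymCurv d n a μ ν (t • x)) t := by
    intro t ht
    have hyU : t • x ∈ U := hmem t ht
    have h1 : HasDerivAt (fun s : ℝ => s • x) x t := by
      simpa using (hasDerivAt_id t).smul_const x
    have h2 : HasDerivAt (fun s : ℝ => a ν (s • x)) (fderiv ℝ (a ν) (t • x) x) t :=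
      HasFDerivAt.comp_hasDerivAt t ((hdiff ν _ hyU).hasFDerivAt) h1
    have h3 : HasDerivAt (fun s : ℝ => s • a ν (s • x))
        (a ν (t • x) + t • fderiv ℝ (a ν) (t • x) x) t := by
      have := (hasDerivAt_id' t).smul h2
      rw [one_smul, add_comm] at this
      exact this
    -- the integrand equals the derivative of g
    have e1 : ∑ μ, t • x μ • fderiv ℝ (a ν) (t • x) (EuclideanSpace.single μ 1)
        = t • fderiv ℝ (a ν) (t • x) x := by
      rw [← Finset.smul_sum, ← hLx]
    have e2 : ∑ μ, t • x μ • fderiv ℝ (a μ) (t • x) (EuclideanSpace.single ν 1)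
        = - a ν (t • x) := by
      have h := hradD (t • x) hyU
      have h' : ∑ μ, (t • x) μ • fderiv ℝ (a μ) (t • x) (EuclideanSpace.single ν 1)
          = - a ν (t • x) := by
        rw [eq_neg_iff_add_eq_zero, add_comm]; exact h
      rw [← h']
      apply Finset.sum_congr rfl
      intro μ _
      rw [smul_smul]
      rfl
    have hr' : ∑ μ, (t * x μ) • a μ (t • x) = 0 := by
      have hr := hrad (t • x) hyU
      rw [← hr]
      apply Finset.sum_congr rfl
      intro μ _
      rfl
    have e3a : ∑ μ, t • x μ • (a μ (t • x) * a ν (t • x)) = 0 := by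
      calc ∑ μ, t • x μ • (a μ (t • x) * a ν (t • x))
          = (∑ μ, (t * x μ) • a μ (t • x)) * a ν (t • x) := by
            rw [Finset.sum_mul]
            apply Finset.sum_congr rfl
            intro μ _
            rw [smul_smul, smul_mul_assoc]
        _ = 0 := by rw [hr', zero_mul]
    have e3b : ∑ μ, t • x μ • (a ν (t • x) * a μ (t • x)) = 0 := by
      calc ∑ μ, t • x μ • (a ν (t • x) * a μ (t • x))
          = a ν (t • x) * (∑ μ, (t * x μ) • a μ (t • x)) := by
            rw [Finset.mul_sum]
            apply Finset.sum_congr rfl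
            intro μ _
            rw [smul_smul, mul_smul_comm]
        _ = 0 := by rw [hr', mul_zero]
    have key : t • ∑ μ, x μ • ymCurv d n a μ ν (t • x)
        = a ν (t • x) + t • fderiv ℝ (a ν) (t • x) x := by
      simp only [ymCurv, ymPDeriv, smul_sub, smul_add, Finset.smul_sum,
        Finset.sum_add_distrib, Finset.sum_sub_distrib]
      rw [e1, e2, e3a, e3b, sub_neg_eq_add, sub_zero, add_zero]
      abel
    rw [key]
    exact h3
  -- integrability of the integrand
  have hint : @IntervalIntegrable (Matrix (Fin n) (Fin n) ℂ)
      PseudoMetricSpace.toUniformSpace.toTopologicalSpace _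
      (fun t : ℝ => t • ∑ μ, x μ • ymCurv d n a μ ν (t • x)) volume 0 1 := by
    apply ContinuousOn.intervalIntegrable
    have hco : Continuous (fun t : ℝ => t • x) := by fun_prop
    have haf : ∀ μ : Fin d, ContinuousOn
        (fun t : ℝ => a μ (t • x)) (Set.uIcc (0:ℝ) 1) := fun μ =>
      (((ha μ).continuousOn).comp hco.continuousOn (fun t ht => hmem t ht))
    have hdf : ∀ μ : Fin d, ContinuousOn
        (fun t : ℝ => fderiv ℝ (a μ) (t • x)) (Set.uIcc (0:ℝ) 1) := fun μ =>
      ((ha μ).continuousOn_fderiv_of_isOpen hUopen (by simp)).comp hco.continuousOn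
        (fun t ht => hmem t ht)
    apply ContinuousOn.smul continuousOn_id
    apply continuousOn_finset_sum
    intro μ _
    apply ContinuousOn.fun_smul continuousOn_const
    unfold ymCurv ymPDeriv
    apply ContinuousOn.add
    · exact ((hdf ν).clm_apply continuousOn_const).sub
        ((hdf μ).clm_apply continuousOn_const)
    · exact ((haf μ).mul (haf ν)).sub ((haf ν).mul (haf μ))
  have hFTC := intervalIntegral.integral_eq_sub_of_hasDerivAt hg hint
  rw [hFTC]
  simp [hrad0]
end

section
/- Fix integers d ≥ 1 and n ≥ 1, and let U ⊆ ℝ^d be a convex open neighborhood of the origin. Let a be a smooth connection one-form on U that is in radial gauge with respect to the origin. Then for every x ∈ U and every index ν ∈ {1, …, d}, ‖a_ν(x)‖ ≤ ‖x‖ ∫₀¹ t |F(t x)| dt, where |F(y)| := (Σ_{μ<ν} ‖F_{μν}(y)‖²)^{1/2} is the pointwise curvature norm; in particular, ‖a_ν(x)‖ ≤ (‖x‖/2) · sup_{t ∈ [0,1]} |F(t x)|. -/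
open MeasureTheory Matrix intervalIntegral

attribute [local instance] Matrix.frobeniusSeminormedAddCommGroup
  Matrix.frobeniusNormedAddCommGroup Matrix.frobeniusIsBoundedSMul
  Matrix.frobeniusNormedSpace

/-- The pointwise curvature norm `|F(x)| = (Σ_{μ<ν} ‖F_{μν}(x)‖²)^{1/2}`. -/
noncomputable def ymCurvNorm (d n : ℕ)
    (a : Fin d → EuclideanSpace ℝ (Fin d) → Matrix (Fin n) (Fin n) ℂ)
    (x : EuclideanSpace ℝ (Fin d)) : ℝ :=
  Real.sqrt (∑ μ, ∑ ν, if μ < ν then ‖ymCurv d n a μ ν x‖ ^ 2 else 0)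

section aux

attribute [local instance] Matrix.frobeniusNormedRing

variable {d n : ℕ}

/-- Multiplication of matrix-valued maps is continuous (Frobenius norm). -/
lemma ym_mul_contOn {U : Set (EuclideanSpace ℝ (Fin d))}
    (f g : EuclideanSpace ℝ (Fin d) → Matrix (Fin n) (Fin n) ℂ)
    (hf : ContinuousOn f U) (hg : ContinuousOn g U) :
    ContinuousOn (fun y => f y * g y) U :=
  hf.mul hg

/-- Decomposition of a Euclidean vector in the standard basis. -/
lemma ym_decomp (v : EuclideanSpace ℝ (Fin d)) :
    v = ∑ μ, v μ • EuclideanSpace.single μ 1 := by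
  have := (EuclideanSpace.basisFun (Fin d) ℝ).sum_repr v
  simp only [EuclideanSpace.basisFun_apply, EuclideanSpace.basisFun_repr] at this
  exact this.symm

lemma ym_curv_antisymm (a : Fin d → EuclideanSpace ℝ (Fin d) → Matrix (Fin n) (Fin n) ℂ)
    (μ ν : Fin d) (y : EuclideanSpace ℝ (Fin d)) :
    ymCurv d n a μ ν y = -(ymCurv d n a ν μ y) := by
  simp only [ymCurv]
  abel

/-- Cauchy–Schwarz bound for `∑ μ, x μ • F_{μν}(y)`. -/
lemma ym_cs (a : Fin d → EuclideanSpace ℝ (Fin d) → Matrix (Fin n) (Fin n) ℂ)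
    (x y : EuclideanSpace ℝ (Fin d)) (ν : Fin d) :
    ‖∑ μ, x μ • ymCurv d n a μ ν y‖ ≤ ‖x‖ * ymCurvNorm d n a y := by
  classical
  set g : Fin d → ℝ := fun μ => ‖ymCurv d n a μ ν y‖ with hg
  set t : Fin d → Fin d → ℝ := fun α β => if α < β then ‖ymCurv d n a α β y‖ ^ 2 else 0 with ht
  have htnn : ∀ α β, 0 ≤ t α β := by
    intro α β; simp only [ht]; split <;> positivity
  have hgν : g ν = 0 := by
    simp only [hg, ymCurv, sub_self, add_zero, norm_zero]
  -- step 3 : ∑ μ, g μ ^ 2 ≤ ∑ α, ∑ β, t α β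
  have hstep3 : ∑ μ, g μ ^ 2 ≤ ∑ α, ∑ β, t α β := by
    have hsplit : ∀ μ : Fin d, g μ ^ 2 = t μ ν + t ν μ := by
      intro μ
      rcases lt_trichotomy μ ν with h | h | h
      · simp [ht, h, not_lt.2 h.le, hg]
      · subst h; simp [ht, hgν]
      · have hgm : g μ = ‖ymCurv d n a ν μ y‖ := by
          rw [show g μ = ‖ymCurv d n a μ ν y‖ from rfl, ym_curv_antisymm a μ ν y, norm_neg]
        simp [ht, h, not_lt.2 h.le, hgm]
    calc ∑ μ, g μ ^ 2 = ∑ μ, t μ ν + ∑ μ, t ν μ := by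
          rw [← Finset.sum_add_distrib]; exact Finset.sum_congr rfl fun μ _ => hsplit μ
      _ = ∑ α ∈ Finset.univ.erase ν, t α ν + ∑ β, t ν β := by
          rw [Finset.sum_erase (f := fun α => t α ν) Finset.univ (show t ν ν = 0 by simp [ht])]
      _ ≤ ∑ α ∈ Finset.univ.erase ν, (∑ β, t α β) + ∑ β, t ν β := by
          gcongr with α hα
          exact Finset.single_le_sum (fun β _ => htnn α β) (Finset.mem_univ ν)
      _ = ∑ α, ∑ β, t α β := by
          rw [add_comm]
          exact Finset.add_sum_erase _ (fun α => ∑ β, t α β) (Finset.mem_univ ν)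
  -- step 1 : triangle inequality
  have hstep1 : ‖∑ μ, x μ • ymCurv d n a μ ν y‖ ≤ ∑ μ, |x μ| * g μ := by
    refine (norm_sum_le _ _).trans ?_
    refine Finset.sum_le_sum fun μ _ => ?_
    rw [norm_smul, Real.norm_eq_abs]
  -- step 2 : Cauchy–Schwarz
  have hCS := Finset.sum_mul_sq_le_sq_mul_sq Finset.univ (fun μ => |x μ|) g
  have habs : ∑ μ, |x μ| ^ 2 = ∑ μ, (x μ) ^ 2 := by
    exact Finset.sum_congr rfl fun μ _ => sq_abs _
  have hxnorm : ‖x‖ = Real.sqrt (∑ μ, (x μ) ^ 2) := by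
    simp [EuclideanSpace.norm_eq, Real.norm_eq_abs, sq_abs]
  have hAnn : (0:ℝ) ≤ ∑ μ, |x μ| * g μ :=
    Finset.sum_nonneg fun μ _ => mul_nonneg (abs_nonneg _) (norm_nonneg _)
  have hA : (∑ μ, |x μ| * g μ) ≤ Real.sqrt ((∑ μ, (x μ) ^ 2) * (∑ α, ∑ β, t α β)) := by
    rw [show (∑ μ, |x μ| * g μ) = Real.sqrt ((∑ μ, |x μ| * g μ) ^ 2) from (Real.sqrt_sq hAnn).symm]
    apply Real.sqrt_le_sqrt
    calc (∑ μ, |x μ| * g μ) ^ 2 ≤ (∑ μ, |x μ| ^ 2) * ∑ μ, g μ ^ 2 := hCS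
      _ ≤ (∑ μ, (x μ) ^ 2) * (∑ α, ∑ β, t α β) := by
          rw [habs]; exact mul_le_mul_of_nonneg_left hstep3 (by positivity)
  calc ‖∑ μ, x μ • ymCurv d n a μ ν y‖ ≤ ∑ μ, |x μ| * g μ := hstep1
    _ ≤ Real.sqrt ((∑ μ, (x μ) ^ 2) * (∑ α, ∑ β, t α β)) := hA
    _ = ‖x‖ * ymCurvNorm d n a y := by
        rw [Real.sqrt_mul (by positivity), hxnorm, ymCurvNorm]

end aux

/-- Pointwise estimate for a local connection one-form in radial gauge in terms of its
curvature: if `a` is a smooth `𝔲(n)`-valued connection one-form in radial gauge with respect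
to the origin on a convex open neighborhood `U ∋ 0` in `ℝ^d`, then for `x ∈ U` and each `ν`,
`‖a_ν(x)‖ ≤ ‖x‖ ∫₀¹ t |F(tx)| dt`, and in particular
`‖a_ν(x)‖ ≤ (‖x‖/2) sup_{t ∈ [0,1]} |F(tx)|`. -/
theorem radial_gauge_pointwise_estimate
    (d n : ℕ) (hd : 1 ≤ d) (hn : 1 ≤ n)
    (U : Set (EuclideanSpace ℝ (Fin d))) (hUopen : IsOpen U) (hUconv : Convex ℝ U)
    (hU0 : (0 : EuclideanSpace ℝ (Fin d)) ∈ U)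
    (a : Fin d → EuclideanSpace ℝ (Fin d) → Matrix (Fin n) (Fin n) ℂ)
    (ha : ∀ μ, ContDiffOn ℝ (⊤ : ℕ∞) (a μ) U)
    (hskew : ∀ μ, ∀ x ∈ U, (a μ x)ᴴ = -(a μ x))
    (hrad0 : ∀ μ, a μ 0 = 0)
    (hrad : ∀ x ∈ U, ∑ μ, x μ • a μ x = 0)
    (x : EuclideanSpace ℝ (Fin d)) (hx : x ∈ U) (ν : Fin d) :
    ‖a ν x‖ ≤ ‖x‖ * ∫ t in (0 : ℝ)..1, t * ymCurvNorm d n a (t • x) ∧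
    ‖a ν x‖ ≤ (‖x‖ / 2) * ⨆ t : Set.Icc (0 : ℝ) 1, ymCurvNorm d n a ((t : ℝ) • x) := by
  classical
  letI : TopologicalSpace (Matrix (Fin n) (Fin n) ℂ) :=
    PseudoMetricSpace.toUniformSpace.toTopologicalSpace
  have hdiff : ∀ (μ : Fin d), ∀ y ∈ U, DifferentiableAt ℝ (a μ) y := fun μ y hy =>
    ((ha μ).differentiableOn (by simp)).differentiableAt (hUopen.mem_nhds hy)
  have hseg : ∀ t ∈ Set.Icc (0 : ℝ) 1, t • x ∈ U := by
    intro t ht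
    have := hUconv hU0 hx (by linarith [ht.2] : (0:ℝ) ≤ 1 - t) ht.1 (by ring)
    simpa using this
  -- derivative of the radial gauge condition
  have radA : ∀ y ∈ U, a ν y + ∑ μ, y μ • ymPDeriv d n (a μ) ν y = 0 := by
    intro y hy
    have hfd : HasFDerivAt (fun z : EuclideanSpace ℝ (Fin d) => ∑ μ, z μ • a μ z)
        (∑ μ, ((y μ) • (fderiv ℝ (a μ) y) +
          (EuclideanSpace.proj μ : EuclideanSpace ℝ (Fin d) →L[ℝ] ℝ).smulRight (a μ y))) y := by
      apply HasFDerivAt.fun_sum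
      intro μ _
      exact ((EuclideanSpace.proj μ : EuclideanSpace ℝ (Fin d) →L[ℝ] ℝ).hasFDerivAt).smul
        (hdiff μ y hy).hasFDerivAt
    have hzero : fderiv ℝ (fun z : EuclideanSpace ℝ (Fin d) => ∑ μ, z μ • a μ z) y = 0 := by
      have hev : (fun z : EuclideanSpace ℝ (Fin d) => ∑ μ, z μ • a μ z)
          =ᶠ[nhds y] (fun _ => 0) := by
        filter_upwards [hUopen.mem_nhds hy] with z hz using hrad z hz
      rw [hev.fderiv_eq]
      exact fderiv_const_apply 0
    have hD := hfd.fderiv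
    rw [hzero] at hD
    have happ := congrArg
      (fun L : EuclideanSpace ℝ (Fin d) →L[ℝ] Matrix (Fin n) (Fin n) ℂ =>
        L (EuclideanSpace.single ν 1)) hD
    simp only [ContinuousLinearMap.sum_apply, ContinuousLinearMap.add_apply,
      ContinuousLinearMap.coe_smul', Pi.smul_apply, ContinuousLinearMap.smulRight_apply,
      ContinuousLinearMap.zero_apply, PiLp.proj_apply, EuclideanSpace.single_apply,
      ite_smul, one_smul, zero_smul, Finset.sum_add_distrib, Finset.sum_ite_eq',
      Finset.mem_univ, if_true] at happ
    rw [add_comm]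
    simp only [ymPDeriv]
    exact happ.symm
  -- key pointwise identity
  have hkey : ∀ t ∈ Set.Icc (0 : ℝ) 1,
      a ν (t • x) + t • (fderiv ℝ (a ν) (t • x) x)
        = t • ∑ μ, x μ • ymCurv d n a μ ν (t • x) := by
    intro t ht
    set y : EuclideanSpace ℝ (Fin d) := t • x with hy
    have hyU : y ∈ U := hseg t ht
    have hyμ : ∀ μ, y μ = t * x μ := fun μ => rfl
    have h1 : fderiv ℝ (a ν) y x = ∑ μ, x μ • ymPDeriv d n (a ν) μ y := by
      conv_lhs => rw [ym_decomp x]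
      rw [map_sum]
      exact Finset.sum_congr rfl fun μ _ => (fderiv ℝ (a ν) y).map_smul _ _
    have h2 : ∑ μ, (t * x μ) • ymPDeriv d n (a μ) ν y = -(a ν y) := by
      have h := radA y hyU
      have : ∑ μ, y μ • ymPDeriv d n (a μ) ν y = ∑ μ, (t * x μ) • ymPDeriv d n (a μ) ν y :=
        Finset.sum_congr rfl fun μ _ => by rw [hyμ μ]
      rw [this] at h
      rw [add_comm] at h
      exact eq_neg_of_add_eq_zero_left h
    have h3 : ∑ μ, (t * x μ) • a μ y = 0 := by
      have h := hrad y hyU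
      have : ∑ μ, y μ • a μ y = ∑ μ, (t * x μ) • a μ y :=
        Finset.sum_congr rfl fun μ _ => by rw [hyμ μ]
      rwa [this] at h
    rw [Finset.smul_sum]
    have hterm : ∀ μ : Fin d, t • (x μ • ymCurv d n a μ ν y)
        = (t * x μ) • ymPDeriv d n (a ν) μ y - (t * x μ) • ymPDeriv d n (a μ) ν y
          + (((t * x μ) • a μ y) * a ν y - a ν y * ((t * x μ) • a μ y)) := by
      intro μ
      simp only [ymCurv, smul_sub, smul_add, smul_smul, smul_mul_assoc, mul_smul_comm]
    rw [Finset.sum_congr rfl fun μ _ => hterm μ]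
    rw [Finset.sum_add_distrib, Finset.sum_sub_distrib, Finset.sum_sub_distrib,
      ← Finset.sum_mul, ← Finset.mul_sum, h2, h3, zero_mul, mul_zero]
    rw [h1, Finset.smul_sum]
    simp only [smul_smul, sub_zero, sub_self, add_zero, sub_neg_eq_add]
    abel
  -- the derivative of t ↦ t • a ν (t • x)
  have hc : ∀ t ∈ Set.Icc (0 : ℝ) 1, HasDerivAt (fun s : ℝ => s • a ν (s • x))
      (t • ∑ μ, x μ • ymCurv d n a μ ν (t • x)) t := by
    intro t ht
    have hyU : t • x ∈ U := hseg t ht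
    have h1 : HasDerivAt (fun s : ℝ => s • x) x t := by
      simpa using (hasDerivAt_id t).smul_const x
    have h2 : HasDerivAt (fun s : ℝ => a ν (s • x)) (fderiv ℝ (a ν) (t • x) x) t :=
      (hdiff ν _ hyU).hasFDerivAt.comp_hasDerivAt t h1
    have h3 := (hasDerivAt_id t).smul h2
    simp only [one_smul, id_eq] at h3
    have := hkey t ht
    rw [← this, add_comm]
    exact h3
  -- continuity facts
  have hsm : Continuous fun t : ℝ => t • x := continuous_id.smul continuous_const
  have hmaps : Set.MapsTo (fun t : ℝ => t • x) (Set.Icc 0 1) U := fun t ht => hseg t ht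
  have hFcontU : ∀ α β : Fin d, ContinuousOn (fun y => ymCurv d n a α β y) U := by
    intro α β
    have hfc : ∀ γ δ : Fin d, ContinuousOn (fun y => ymPDeriv d n (a γ) δ y) U := fun γ δ =>
      ((ha γ).continuousOn_fderiv_of_isOpen hUopen (by simp)).clm_apply continuousOn_const
    exact ((hfc β α).sub (hfc α β)).add
      ((ym_mul_contOn _ _ ((ha α).continuousOn) ((ha β).continuousOn)).sub
        (ym_mul_contOn _ _ ((ha β).continuousOn) ((ha α).continuousOn)))
  have hFcont : ∀ α β : Fin d,
      ContinuousOn (fun t : ℝ => ymCurv d n a α β (t • x)) (Set.Icc 0 1) := fun α β =>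
    (hFcontU α β).comp (hsm.continuousOn) hmaps
  have hNcont : ContinuousOn (fun t : ℝ => ymCurvNorm d n a (t • x)) (Set.Icc 0 1) := by
    apply Real.continuous_sqrt.comp_continuousOn
    apply continuousOn_finset_sum
    intro α _
    apply continuousOn_finset_sum
    intro β _
    by_cases h : α < β
    · simp only [h, if_true]
      exact ((hFcont α β).norm.pow 2)
    · simp only [h, if_false]
      exact continuousOn_const
  have hccont : ContinuousOn (fun t : ℝ => t • ∑ μ, x μ • ymCurv d n a μ ν (t • x))
      (Set.Icc 0 1) := by
    apply (continuousOn_id).smul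
    apply continuousOn_finset_sum
    intro μ _
    exact (continuousOn_const : ContinuousOn (fun _ : ℝ => x μ) _).smul (hFcont μ ν)
  have hcint : IntervalIntegrable (fun t : ℝ => t • ∑ μ, x μ • ymCurv d n a μ ν (t • x))
      volume 0 1 := by
    apply ContinuousOn.intervalIntegrable
    rwa [Set.uIcc_of_le (by norm_num : (0:ℝ) ≤ 1)]
  have hgcont : ContinuousOn (fun t : ℝ => ‖x‖ * (t * ymCurvNorm d n a (t • x)))
      (Set.Icc 0 1) :=
    continuousOn_const.mul (continuousOn_id.mul hNcont)
  have hgint : IntervalIntegrable (fun t : ℝ => ‖x‖ * (t * ymCurvNorm d n a (t • x)))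
      volume 0 1 := by
    apply ContinuousOn.intervalIntegrable
    rwa [Set.uIcc_of_le (by norm_num : (0:ℝ) ≤ 1)]
  -- integral identity
  have hint : (∫ t in (0:ℝ)..1, t • ∑ μ, x μ • ymCurv d n a μ ν (t • x)) = a ν x := by
    rw [integral_eq_sub_of_hasDerivAt (f := fun s : ℝ => s • a ν (s • x))
      (fun t ht => hc t (by rwa [Set.uIcc_of_le (by norm_num : (0:ℝ) ≤ 1)] at ht)) hcint]
    simp
  -- first estimate
  have hNnn : ∀ t : ℝ, 0 ≤ ymCurvNorm d n a (t • x) := fun t => Real.sqrt_nonneg _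
  have hfirst : ‖a ν x‖ ≤ ‖x‖ * ∫ t in (0:ℝ)..1, t * ymCurvNorm d n a (t • x) := by
    rw [← hint]
    have hbound : ∀ᵐ t ∂(volume.restrict (Set.uIoc (0:ℝ) 1)),
        ‖t • ∑ μ, x μ • ymCurv d n a μ ν (t • x)‖ ≤ ‖x‖ * (t * ymCurvNorm d n a (t • x)) := by
      apply ae_restrict_of_forall_mem measurableSet_uIoc
      intro t ht
      rw [Set.uIoc_of_le (by norm_num : (0:ℝ) ≤ 1)] at ht
      rw [norm_smul, Real.norm_eq_abs, abs_of_nonneg ht.1.le]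
      calc t * ‖∑ μ, x μ • ymCurv d n a μ ν (t • x)‖
          ≤ t * (‖x‖ * ymCurvNorm d n a (t • x)) := by
            exact mul_le_mul_of_nonneg_left (ym_cs a x (t • x) ν) ht.1.le
        _ = ‖x‖ * (t * ymCurvNorm d n a (t • x)) := by ring
    have hbound' : ∀ᵐ t ∂volume, t ∈ Set.Ioc (0:ℝ) 1 →
        ‖t • ∑ μ, x μ • ymCurv d n a μ ν (t • x)‖ ≤ ‖x‖ * (t * ymCurvNorm d n a (t • x)) := by
      rw [← Set.uIoc_of_le (zero_le_one' ℝ)]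
      exact (ae_restrict_iff' measurableSet_uIoc).1 hbound
    have := intervalIntegral.norm_integral_le_of_norm_le zero_le_one hbound' hgint
    have habs : |∫ t in (0:ℝ)..1, ‖x‖ * (t * ymCurvNorm d n a (t • x))|
        = ∫ t in (0:ℝ)..1, ‖x‖ * (t * ymCurvNorm d n a (t • x)) := by
      rw [abs_of_nonneg]
      apply intervalIntegral.integral_nonneg (by norm_num : (0:ℝ) ≤ 1)
      intro u hu
      have := hNnn u
      have hu0 := hu.1
      positivity
    refine this.trans ?_
    rw [intervalIntegral.integral_const_mul]
  constructor
  · exact hfirst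
  -- second estimate
  · set C : ℝ := ⨆ t : Set.Icc (0:ℝ) 1, ymCurvNorm d n a ((t : ℝ) • x) with hC
    have hbdd : BddAbove (Set.range fun t : Set.Icc (0:ℝ) 1 => ymCurvNorm d n a ((t : ℝ) • x)) := by
      have hcomp := (isCompact_Icc.image_of_continuousOn hNcont).bddAbove
      have : (Set.range fun t : Set.Icc (0:ℝ) 1 => ymCurvNorm d n a ((t : ℝ) • x))
          = (fun t : ℝ => ymCurvNorm d n a (t • x)) '' Set.Icc 0 1 := by
        rw [show (fun t : Set.Icc (0:ℝ) 1 => ymCurvNorm d n a ((t : ℝ) • x))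
            = (fun t : ℝ => ymCurvNorm d n a (t • x)) ∘ (Subtype.val) from rfl,
          Set.range_comp, Subtype.range_coe]
      rwa [this]
    have hle : ∀ t ∈ Set.Icc (0:ℝ) 1, ymCurvNorm d n a (t • x) ≤ C := by
      intro t ht
      exact le_ciSup hbdd ⟨t, ht⟩
    have hmono : (∫ t in (0:ℝ)..1, t * ymCurvNorm d n a (t • x)) ≤ ∫ t in (0:ℝ)..1, t * C := by
      apply intervalIntegral.integral_mono_on (by norm_num)
      · apply ContinuousOn.intervalIntegrable
        rw [Set.uIcc_of_le (by norm_num : (0:ℝ) ≤ 1)]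
        exact continuousOn_id.mul hNcont
      · exact (continuous_id.mul continuous_const).intervalIntegrable 0 1
      · intro u hu
        exact mul_le_mul_of_nonneg_left (hle u hu) hu.1
    have hval : (∫ t in (0:ℝ)..1, t * C) = C / 2 := by
      rw [intervalIntegral.integral_mul_const, integral_id]
      ring
    calc ‖a ν x‖ ≤ ‖x‖ * ∫ t in (0:ℝ)..1, t * ymCurvNorm d n a (t • x) := hfirst
      _ ≤ ‖x‖ * (C / 2) := by
          rw [← hval]
          exact mul_le_mul_of_nonneg_left hmono (norm_nonneg x)
      _ = (‖x‖ / 2) * C := by ring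
end
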